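/- arXiv:0811.0799 — 2 statements merged into one kernel-verified Lean document; each statement's English description precedes it below -/
import Mathlib

section
/- Let n ≥ 2 and a, b > 0. The even radius of the semiregular 2n-gon P_n(a,b) — the distance from the center of the polygon to the midpoint of an edge of length a — equals r_n(a,b) = (b + a·cos(π/n)) / (2·sin(π/n)), and the odd radius (distance from center to midpoint of an edge of length b) equals r_n(b,a) = (a + b·cos(π/n)) / (2·sin(π/n)). -/
/-!
Identify the plane with `ℂ` and put `ω = exp (iπ/n)`, so that the edges are `e i = a ω^i` or
`b ω^i` according to the parity of `i`. Since `e (i + 2) = ω² e i`, the vertices satisfy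
`p (k + 2) = p 2 + ω² p k`; as `ω²` is a primitive `n`-th root of unity the polygon closes up and
its vertex sequence is `2n`-periodic, so averaging over one period shows that the centroid is the
fixed point `c = (a + b ω) / (1 - ω²)` of the rotation `z ↦ p 2 + ω² z`. The radii then follow
from `1 - ω² = -2i sin (π/n) ω` and `1 + ω² = 2 cos (π/n) ω`.
-/

open Real Finset

section RotationInvariantEdges

variable {R : Type*} [CommRing R] {e : ℕ → R} {m : ℕ} {ζ : R}

theorem sum_range_add_of_rotate (hrot : ∀ i, e (m + i) = ζ * e i) (k : ℕ) :
    ∑ i ∈ range (m + k), e i = ∑ i ∈ range m, e i + ζ * ∑ i ∈ range k, e i := by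
  simp only [sum_range_add, hrot, mul_sum]

theorem apply_mul_add_of_rotate (hrot : ∀ i, e (m + i) = ζ * e i) (j i : ℕ) :
    e (m * j + i) = ζ ^ j * e i := by
  induction j generalizing i with
  | zero => simp
  | succ j ih => rw [Nat.mul_succ, add_assoc, ih, hrot, pow_succ, mul_assoc]

theorem sum_range_mul_of_rotate (hrot : ∀ i, e (m + i) = ζ * e i) (j : ℕ) :
    ∑ i ∈ range (m * j), e i = (∑ i ∈ range m, e i) * ∑ l ∈ range j, ζ ^ l := by
  induction j with
  | zero => simp
  | succ j ih =>
    rw [Nat.mul_succ, add_comm, sum_range_add_of_rotate hrot, ih, geom_sum_succ]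
    ring

variable [IsDomain R] {n : ℕ}

theorem sum_range_mul_eq_zero_of_rotate (hrot : ∀ i, e (m + i) = ζ * e i) (hζn : ζ ^ n = 1)
    (hζ : ζ ≠ 1) : ∑ i ∈ range (m * n), e i = 0 := by
  have hgeom : ∑ l ∈ range n, ζ ^ l = 0 := by
    have h := geom_sum_mul ζ n
    rw [hζn, sub_self] at h
    exact (mul_eq_zero.1 h).resolve_right (sub_ne_zero.2 hζ)
  rw [sum_range_mul_of_rotate hrot, hgeom, mul_zero]

theorem one_sub_mul_sum_partialSums_of_rotate (hrot : ∀ i, e (m + i) = ζ * e i)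
    (hζn : ζ ^ n = 1) (hζ : ζ ≠ 1) :
    (1 - ζ) * ∑ k ∈ range (m * n), ∑ i ∈ range k, e i
      = (m * n : ℕ) * ∑ i ∈ range m, e i := by
  set P : ℕ → R := fun k => ∑ i ∈ range k, e i
  have hperiod : ∀ k, P (m * n + k) = P k := fun k => by
    simp only [P, sum_range_add_of_rotate (apply_mul_add_of_rotate hrot n),
      sum_range_mul_eq_zero_of_rotate hrot hζn hζ, hζn, zero_add, one_mul]
  have hshift : ∑ k ∈ range (m * n), P (m + k) = ∑ k ∈ range (m * n), P k := by
    have h₁ := sum_range_add P m (m * n)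
    have h₂ := sum_range_add P (m * n) m
    simp only [hperiod] at h₂
    rw [add_comm m] at h₁
    linear_combination h₂ - h₁
  have hstep : ∀ k, P (m + k) = P m + ζ * P k := sum_range_add_of_rotate hrot
  simp only [hstep, sum_add_distrib, sum_const, card_range, nsmul_eq_mul, ← mul_sum] at hshift
  linear_combination -hshift

end RotationInvariantEdges

theorem centroid_partialSums_alternating {K : Type*} [Field K] [CharZero K] {n : ℕ} (hn : 1 < n)
    {ω : K} (hω : IsPrimitiveRoot (ω ^ 2) n) (a b : K) :
    (2 * n : K)⁻¹ * ∑ k ∈ range (2 * n), ∑ i ∈ range k, (if Even i then a else b) * ω ^ i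
      = (a + b * ω) / (1 - ω ^ 2) := by
  set e : ℕ → K := fun i => (if Even i then a else b) * ω ^ i
  have hrot : ∀ i, e (2 + i) = ω ^ 2 * e i := fun i => by
    simp only [e, Nat.even_add, even_two, true_iff, pow_add]
    ring
  have hζ : ω ^ 2 ≠ 1 := hω.ne_one hn
  have h := one_sub_mul_sum_partialSums_of_rotate hrot hω.pow_eq_one hζ
  have he : e 0 + e 1 = a + b * ω := by simp [e]
  rw [sum_range_succ, sum_range_one, he] at h
  have hn0 : (n : K) ≠ 0 := by exact_mod_cast (by omega : n ≠ 0)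
  rw [eq_div_iff (sub_ne_zero.2 hζ.symm), mul_right_comm, mul_assoc, h]
  push_cast
  field_simp

namespace Complex

theorem one_add_exp_mul_I_sq (z : ℂ) : 1 + exp (z * I) ^ 2 = 2 * cos z * exp (z * I) := by
  rw [exp_mul_I]
  linear_combination sin z ^ 2 * I_sq - sin_sq_add_cos_sq z

theorem norm_one_sub_exp_mul_I_sq (θ : ℝ) : ‖1 - exp (θ * I) ^ 2‖ = 2 * |Real.sin θ| := by
  rw [norm_sub_rev, ← exp_nat_mul,
    show ((2 : ℕ) : ℂ) * (θ * I) = I * ((2 * θ : ℝ) : ℂ) by push_cast; ring,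
    norm_exp_I_mul_ofReal_sub_one, mul_div_cancel_left₀ θ two_ne_zero, norm_mul,
    Real.norm_two, Real.norm_eq_abs]

theorem isPrimitiveRoot_exp_pi_div_mul_I_sq (n : ℕ) (hn : n ≠ 0) :
    IsPrimitiveRoot (exp ((π / n : ℝ) * I) ^ 2) n := by
  rw [← exp_nat_mul]
  convert isPrimitiveRoot_exp n hn using 2
  push_cast; ring

theorem equivRealProdLm_symm_cos_sin (x : ℝ) :
    equivRealProdLm.symm (Real.cos x, Real.sin x) = exp (x * I) := by
  rw [equivRealProdLm_symm_apply, exp_mul_I, ofReal_cos, ofReal_sin]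

theorem norm_equivRealProdLm_symm_sub (z w : ℝ × ℝ) :
    ‖equivRealProdLm.symm z - equivRealProdLm.symm w‖ = √((z.1 - w.1) ^ 2 + (z.2 - w.2) ^ 2) := by
  rw [← dist_eq_norm, dist_eq_re_im]
  simp

theorem norm_div_one_sub_exp_mul_I_sq (θ r : ℝ) (k : ℕ) :
    ‖exp (θ * I) ^ k * r / (1 - exp (θ * I) ^ 2)‖ = |r| / (2 * |Real.sin θ|) := by
  rw [norm_div, norm_mul, norm_pow, norm_exp_ofReal_mul_I, one_pow, one_mul, norm_real,
    Real.norm_eq_abs, norm_one_sub_exp_mul_I_sq]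

end Complex

theorem sin_pi_div_pos {n : ℕ} (hn : 2 ≤ n) : 0 < Real.sin (π / n) := by
  have hn' : (2 : ℝ) ≤ n := by exact_mod_cast hn
  apply sin_pos_of_pos_of_lt_pi (by positivity)
  rw [div_lt_iff₀ (by positivity)]
  nlinarith [pi_pos]

theorem cos_pi_div_nonneg {n : ℕ} (hn : 2 ≤ n) : 0 ≤ Real.cos (π / n) := by
  have hn' : (2 : ℝ) ≤ n := by exact_mod_cast hn
  apply cos_nonneg_of_mem_Icc ⟨by linarith [pi_pos, show 0 ≤ π / n by positivity], ?_⟩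
  rw [div_le_div_iff₀ (by positivity) two_pos]
  nlinarith [pi_pos]

open Complex in
theorem norm_center_sub_even_midpoint {θ : ℝ} (hθ : Real.sin θ ≠ 0) (a b : ℝ) :
    ‖(a + b * exp (θ * I)) / (1 - exp (θ * I) ^ 2) - a / 2‖
      = |b + a * Real.cos θ| / (2 * |Real.sin θ|) := by
  have hden : 1 - exp (θ * I) ^ 2 ≠ 0 := by
    rw [← norm_ne_zero_iff, norm_one_sub_exp_mul_I_sq]; positivity
  rw [← norm_div_one_sub_exp_mul_I_sq θ _ 1, div_sub' hden]
  congr 2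
  push_cast
  linear_combination (a / 2 : ℂ) * one_add_exp_mul_I_sq θ

open Complex in
theorem norm_center_sub_odd_midpoint {θ : ℝ} (hθ : Real.sin θ ≠ 0) (a b : ℝ) :
    ‖(a + b * exp (θ * I)) / (1 - exp (θ * I) ^ 2) - (a + b / 2 * exp (θ * I))‖
      = |a + b * Real.cos θ| / (2 * |Real.sin θ|) := by
  have hden : 1 - exp (θ * I) ^ 2 ≠ 0 := by
    rw [← norm_ne_zero_iff, norm_one_sub_exp_mul_I_sq]; positivity
  rw [← norm_div_one_sub_exp_mul_I_sq θ _ 2, div_sub' hden]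
  congr 2
  push_cast
  linear_combination (b / 2 * exp (θ * I) : ℂ) * one_add_exp_mul_I_sq θ

/-- The even radius of the semiregular `2n`-gon `P_n(a,b)` (distance from the centroid
to the midpoint of an edge of length `a`) is `r_n(a,b) = (b + a·cos(π/n))/(2·sin(π/n))`,
and the odd radius is `r_n(b,a)`. -/
theorem semiregular_polygon_radii (n : ℕ) (hn : 2 ≤ n) (a b : ℝ)
    (ha : 0 < a) (hb : 0 < b)
    (v : ℕ → ℝ × ℝ)
    (hv : ∀ i, v i = (if Even i then a else b) •
      (Real.cos (i * π / n), Real.sin (i * π / n)))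
    -- the vertices of the polygon, starting at the origin
    (p : ℕ → ℝ × ℝ) (hp : ∀ k, p k = ∑ i ∈ Finset.range k, v i)
    -- the center of the polygon: the centroid of its vertices
    (c : ℝ × ℝ) (hc : c = (1 / (2 * n : ℝ)) • ∑ k ∈ Finset.range (2 * n), p k)
    -- the midpoints of the first even edge and the first odd edge
    (qeven qodd : ℝ × ℝ)
    (hqeven : qeven = p 0 + (1 / 2 : ℝ) • v 0)
    (hqodd : qodd = p 1 + (1 / 2 : ℝ) • v 1) :
    Real.sqrt ((c.1 - qeven.1) ^ 2 + (c.2 - qeven.2) ^ 2)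
        = (b + a * Real.cos (π / n)) / (2 * Real.sin (π / n)) ∧
      Real.sqrt ((c.1 - qodd.1) ^ 2 + (c.2 - qodd.2) ^ 2)
        = (a + b * Real.cos (π / n)) / (2 * Real.sin (π / n)) := by
  set L := Complex.equivRealProdLm.symm
  set ω := Complex.exp ((π / n : ℝ) * Complex.I)
  have hLv : ∀ i, L (v i) = (if Even i then (a : ℂ) else b) * ω ^ i := fun i => by
    rw [hv, map_smul, Complex.real_smul, Complex.equivRealProdLm_symm_cos_sin,
      ← Complex.exp_nat_mul]
    split_ifs <;> push_cast <;> ring_nf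
  have hLc : L c = (a + b * ω) / (1 - ω ^ 2) := by
    rw [hc, map_smul]
    simp only [map_sum, hp, hLv, Complex.real_smul, one_div, Complex.ofReal_inv,
      Complex.ofReal_mul, Complex.ofReal_ofNat, Complex.ofReal_natCast]
    exact centroid_partialSums_alternating (by omega)
      (Complex.isPrimitiveRoot_exp_pi_div_mul_I_sq n (by omega)) a b
  have hLqeven : L qeven = a / 2 := by
    rw [hqeven, hp, sum_range_zero, zero_add, map_smul, hLv, if_pos Even.zero, Complex.real_smul]
    push_cast; ring
  have hLqodd : L qodd = a + b / 2 * ω := by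
    rw [hqodd, hp, sum_range_one, map_add, map_smul, hLv, hLv, if_pos Even.zero,
      if_neg Nat.not_even_one, Complex.real_smul]
    push_cast; ring
  have hsin := sin_pi_div_pos hn
  have hcos := cos_pi_div_nonneg hn
  rw [← Complex.norm_equivRealProdLm_symm_sub, ← Complex.norm_equivRealProdLm_symm_sub, hLc,
    hLqeven, hLqodd, norm_center_sub_even_midpoint hsin.ne', norm_center_sub_odd_midpoint hsin.ne',
    abs_of_pos hsin, abs_of_nonneg (by positivity), abs_of_nonneg (by positivity)]
  exact ⟨rfl, rfl⟩
end

section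
/- Let m, n be even positive integers, γ = gcd(m,n), and suppose γ > 2 and at least one of m/γ, n/γ is even. Then for every choice of signs and every ε ∈ {-2, 0, 2}, m - n + ε is not divisible by 2γ; in particular there is no integer k coprime to 2mn/γ with k ≡ m ± 1 (mod 2m) and k ≡ n ± 1 (mod 2n). -/
/-! Since `γ` divides `m` and `n`, a relation `2γ ∣ m - n + ε` forces `γ ∣ ε`, which is impossible
for `ε = ±2` once `γ > 2`. For `ε = 0`, writing `m = γ a`, `n = γ b` with `a`, `b` coprime, it
says `a ≡ b (mod 2)`; as one of them is even, both would be, contradicting coprimality.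
Subtracting the two congruences for `k` gives `2γ ∣ m - n + (s - t)` with `s - t ∈ {-2, 0, 2}`. -/

theorem Nat.Coprime.not_two_dvd_sub {a b : ℕ} (hab : a.Coprime b) (h : Even a ∨ Even b) :
    ¬ (2 : ℤ) ∣ (a : ℤ) - b := by
  intro hdvd
  have hsame : Even a ↔ Even b := by
    rw [← Int.even_coe_nat a, ← Int.even_coe_nat b]
    exact (Int.even_sub.mp (even_iff_two_dvd.mpr hdvd))
  have hboth : 2 ∣ a ∧ 2 ∣ b := by
    rcases h with h | h
    · exact ⟨h.two_dvd, (hsame.mp h).two_dvd⟩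
    · exact ⟨(hsame.mpr h).two_dvd, h.two_dvd⟩
  have := Nat.dvd_gcd hboth.1 hboth.2
  rw [hab.gcd_eq_one] at this
  omega

theorem Int.not_dvd_sub_add_of_abs_lt {g m n ε : ℤ} (hm : g ∣ m) (hn : g ∣ n) (hε : ε ≠ 0)
    (hεg : |ε| < g) : ¬ g ∣ m - n + ε :=
  fun h ↦ hε (Int.eq_zero_of_abs_lt_dvd ((dvd_add_right (dvd_sub hm hn)).mp h) hεg)

theorem not_two_mul_gcd_dvd_sub {m n : ℕ} (hγ : 0 < Nat.gcd m n)
    (heven : Even (m / Nat.gcd m n) ∨ Even (n / Nat.gcd m n)) :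
    ¬ (2 * Nat.gcd m n : ℤ) ∣ (m : ℤ) - n := by
  set γ := Nat.gcd m n
  have hsub : (m : ℤ) - n = ((m / γ : ℕ) - (n / γ : ℕ)) * γ := by
    rw [sub_mul, ← Nat.cast_mul, ← Nat.cast_mul, Nat.div_mul_cancel (Nat.gcd_dvd_left m n),
      Nat.div_mul_cancel (Nat.gcd_dvd_right m n)]
  rw [hsub, mul_dvd_mul_iff_right (by exact_mod_cast hγ.ne')]
  exact (Nat.coprime_div_gcd_div_gcd hγ).not_two_dvd_sub heven

theorem two_mul_dvd_sub_add_of_dvd_sub {g m n k s t : ℤ} (hm : g ∣ m) (hn : g ∣ n)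
    (hks : 2 * m ∣ k - (m + s)) (hkt : 2 * n ∣ k - (n + t)) : 2 * g ∣ m - n + (s - t) := by
  have h := dvd_sub ((mul_dvd_mul_left 2 hn).trans hkt) ((mul_dvd_mul_left 2 hm).trans hks)
  rwa [show k - (n + t) - (k - (m + s)) = m - n + (s - t) by ring] at h

theorem no_galois_automorphism_general (m n : ℕ) (γ : ℕ) (hγ : γ = Nat.gcd m n)
    (hγ2 : 2 < γ) (heven : Even (m / γ) ∨ Even (n / γ)) :
    (∀ ε ∈ ({-2, 0, 2} : Set ℤ), ¬ ((2 * γ : ℤ) ∣ ((m : ℤ) - n + ε))) ∧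
    ¬ ∃ k : ℤ, IsCoprime k ((2 * m * n / γ : ℕ) : ℤ) ∧
        (∃ s ∈ ({-1, 1} : Set ℤ), (2 * m : ℤ) ∣ (k - (m + s))) ∧
        (∃ t ∈ ({-1, 1} : Set ℤ), (2 * n : ℤ) ∣ (k - (n + t))) := by
  subst hγ
  have hm : (Nat.gcd m n : ℤ) ∣ m := Int.natCast_dvd_natCast.mpr (Nat.gcd_dvd_left m n)
  have hn : (Nat.gcd m n : ℤ) ∣ n := Int.natCast_dvd_natCast.mpr (Nat.gcd_dvd_right m n)
  have hγ : (2 : ℤ) < Nat.gcd m n := by exact_mod_cast hγ2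
  have key : ∀ ε ∈ ({-2, 0, 2} : Set ℤ), ¬ ((2 * Nat.gcd m n : ℤ) ∣ ((m : ℤ) - n + ε)) := by
    rintro ε (rfl | rfl | rfl) hdvd
    · exact Int.not_dvd_sub_add_of_abs_lt hm hn (by norm_num) (by simpa using hγ)
        ((dvd_mul_left _ _).trans hdvd)
    · exact not_two_mul_gcd_dvd_sub (by omega) heven (by simpa using hdvd)
    · exact Int.not_dvd_sub_add_of_abs_lt hm hn (by norm_num) (by simpa using hγ)
        ((dvd_mul_left _ _).trans hdvd)
  refine ⟨key, ?_⟩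
  rintro ⟨k, -, ⟨s, hs, hks⟩, ⟨t, ht, hkt⟩⟩
  refine key (s - t) ?_ (two_mul_dvd_sub_add_of_dvd_sub hm hn hks hkt)
  rcases hs with rfl | rfl <;> rcases ht with rfl | rfl <;> norm_num

/-- If `m`, `n` are even, `γ = gcd(m,n) > 2` and at least one of `m/γ`, `n/γ` is even,
then `m - n + ε` is never divisible by `2γ` for `ε ∈ {-2,0,2}`, and there is no
integer `k` coprime to `2mn/γ` with `k ≡ m ± 1 (mod 2m)` and `k ≡ n ± 1 (mod 2n)`. -/
theorem no_galois_automorphism (m n : ℕ) (hm : 0 < m) (hn : 0 < n)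
    (hme : Even m) (hne : Even n) (γ : ℕ) (hγ : γ = Nat.gcd m n)
    (hγ2 : 2 < γ) (heven : Even (m / γ) ∨ Even (n / γ)) :
    (∀ ε ∈ ({-2, 0, 2} : Set ℤ), ¬ ((2 * γ : ℤ) ∣ ((m : ℤ) - n + ε))) ∧
    ¬ ∃ k : ℤ, IsCoprime k ((2 * m * n / γ : ℕ) : ℤ) ∧
        (∃ s ∈ ({-1, 1} : Set ℤ), (2 * m : ℤ) ∣ (k - (m + s))) ∧
        (∃ t ∈ ({-1, 1} : Set ℤ), (2 * n : ℤ) ∣ (k - (n + t))) :=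
  no_galois_automorphism_general m n γ hγ hγ2 heven
end
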